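/- arXiv:1604.00072 — 6 statements merged into one kernel-verified Lean document; each statement's English description precedes it below -/
import Mathlib

section
/- Let Λ be a row-finite k-graph and {T_λ, T_{μ*}} a Cohn Λ-family in an R-algebra A. Then for all λ, μ ∈ Λ, T_λ T_{λ*} T_μ T_{μ*} = Σ_{λν ∈ MCE(λ,μ)} T_{λν} T_{(λν)*}; in particular the elements T_λ T_{λ*} (λ ∈ Λ) pairwise commute. -/
/-- A higher-rank graph (`k`-graph): a small category with a degree functor to `ℕ^k`
satisfying the factorisation property.  Paths and vertices live in one type `Path`;
vertices are the paths of degree `0`. Composition is a total function which is only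
meaningful on composable pairs. -/
structure KGraph (k : ℕ) where
  Path : Type
  src : Path → Path
  rng : Path → Path
  comp : Path → Path → Path
  deg : Path → Fin k → ℕ
  deg_src : ∀ a, deg (src a) = 0
  deg_rng : ∀ a, deg (rng a) = 0
  src_vertex : ∀ a, deg a = 0 → src a = a
  rng_vertex : ∀ a, deg a = 0 → rng a = a
  comp_assoc : ∀ a b c, src a = rng b → src b = rng c →
    comp (comp a b) c = comp a (comp b c)
  rng_comp : ∀ a b, src a = rng b → rng (comp a b) = rng a
  src_comp : ∀ a b, src a = rng b → src (comp a b) = src b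
  deg_comp : ∀ a b, src a = rng b → deg (comp a b) = deg a + deg b
  comp_rng_self : ∀ a, comp (rng a) a = a
  comp_src_self : ∀ a, comp a (src a) = a
  factor : ∀ a (m n : Fin k → ℕ), deg a = m + n →
    ∃! p : Path × Path, src p.1 = rng p.2 ∧ comp p.1 p.2 = a ∧
      deg p.1 = m ∧ deg p.2 = n

namespace KGraph

variable {k : ℕ}

/-- `v` is a vertex iff it has degree `0`. -/
def IsVertex (Λ : KGraph k) (v : Λ.Path) : Prop := Λ.deg v = 0

/-- The set `vΛ¹` of edges (paths of degree `e_i` for some `i`) with range `v`. -/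
def edgesAt (Λ : KGraph k) (v : Λ.Path) : Set Λ.Path :=
  {e | Λ.rng e = v ∧ ∃ i : Fin k, Λ.deg e = Pi.single i 1}

/-- `Λ` is row-finite: each vertex receives finitely many edges. -/
def RowFinite (Λ : KGraph k) : Prop := ∀ v, (Λ.edgesAt v).Finite

/-- `Λ` has no sources: `vΛ^m ≠ ∅` for every vertex `v` and every `m ∈ ℕ^k`. -/
def NoSources (Λ : KGraph k) : Prop :=
  ∀ v, Λ.IsVertex v → ∀ m : Fin k → ℕ, ∃ a, Λ.rng a = v ∧ Λ.deg a = m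

/-- `MCE(l, m)`: minimal common extensions of `l` and `m`. -/
def MCE (Λ : KGraph k) (l m : Λ.Path) : Set Λ.Path :=
  {t | Λ.deg t = Λ.deg l ⊔ Λ.deg m ∧
    (∃ ν, Λ.src l = Λ.rng ν ∧ Λ.comp l ν = t) ∧
    (∃ γ, Λ.src m = Λ.rng γ ∧ Λ.comp m γ = t)}

/-- `Λ^min(l, m)`: pairs `(ν, γ)` with `lν = mγ ∈ MCE(l, m)`. -/
def MinPairs (Λ : KGraph k) (l m : Λ.Path) : Set (Λ.Path × Λ.Path) :=
  {p | Λ.src l = Λ.rng p.1 ∧ Λ.src m = Λ.rng p.2 ∧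
    Λ.comp l p.1 = Λ.comp m p.2 ∧ Λ.comp l p.1 ∈ Λ.MCE l m}

/-- `E ⊆ vΛ` is exhaustive if every path with range `v` has a common extension with
some member of `E`. -/
def IsExhaustive (Λ : KGraph k) (v : Λ.Path) (E : Set Λ.Path) : Prop :=
  ∀ a, Λ.rng a = v → ∃ μ ∈ E, (Λ.MinPairs a μ).Nonempty

end KGraph

/-- A Cohn `Λ`-family in a ring `A` : relations (CP1)–(CP3). -/
structure IsCohnFamily {k : ℕ} (Λ : KGraph k) (A : Type) [Ring A]
    (T Ts : Λ.Path → A) : Prop where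
  ghost_vertex : ∀ v, Λ.IsVertex v → Ts v = T v
  vertex_idem : ∀ v, Λ.IsVertex v → T v * T v = T v
  vertex_orth : ∀ v w, Λ.IsVertex v → Λ.IsVertex w → v ≠ w → T v * T w = 0
  mul_comp : ∀ a b, Λ.src a = Λ.rng b → T a * T b = T (Λ.comp a b)
  ghost_mul_comp : ∀ a b, Λ.src a = Λ.rng b → Ts b * Ts a = Ts (Λ.comp a b)
  cp3 : ∀ a b, Ts a * T b = ∑ᶠ p ∈ Λ.MinPairs a b, T p.1 * Ts p.2

/-- Product of the images of the elements of a finset, in some fixed enumeration.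
(The products we take are over pairwise-commuting factors, so the order is immaterial.) -/
noncomputable def listProd {A : Type} [Monoid A] {ι : Type} (s : Finset ι) (f : ι → A) : A :=
  (s.toList.map f).prod

/-- `F_{T,v} := T_v - ∏_{e ∈ vΛ¹} (T_v - T_e T_{e*})`. -/
noncomputable def FF {k : ℕ} (Λ : KGraph k) (hrf : Λ.RowFinite) {A : Type} [Ring A]
    (T Ts : Λ.Path → A) (v : Λ.Path) : A :=
  T v - listProd (hrf v).toFinset (fun e => T v - T e * Ts e)

lemma KGraph.finite_paths_aux {k : ℕ} (Λ : KGraph k) (hrf : Λ.RowFinite) :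
    ∀ (N : ℕ) (n : Fin k → ℕ), (∑ i, n i) = N → ∀ v : Λ.Path,
      {a : Λ.Path | Λ.rng a = v ∧ Λ.deg a = n}.Finite := by
  intro N
  induction N using Nat.strong_induction_on with
  | _ N ih =>
    intro n hn v
    rcases Nat.eq_zero_or_pos N with h0 | hpos
    · have hn0 : n = 0 := by
        funext j
        have h := hn.trans h0
        exact (Finset.sum_eq_zero_iff.mp h) j (Finset.mem_univ j)
      refine (Set.finite_singleton v).subset ?_
      rintro a ⟨hra, hda⟩
      have : Λ.rng a = a := Λ.rng_vertex a (by rw [hda, hn0])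
      rw [← hra, this]
      exact Set.mem_singleton _
    · obtain ⟨i, _, hi⟩ : ∃ i ∈ Finset.univ, n i ≠ 0 :=
        Finset.exists_ne_zero_of_sum_ne_zero (by omega : (∑ i, n i) ≠ 0)
      set n' : Fin k → ℕ := fun j => n j - (Pi.single i 1 : Fin k → ℕ) j with hn'
      have hdec : n = Pi.single i 1 + n' := by
        funext j
        by_cases hj : j = i
        · subst hj; simp [hn', Pi.single_eq_same]; omega
        · simp [hn', Pi.single_eq_of_ne hj]
      have hsum' : (∑ j, n' j) = N - 1 := by
        have h1 : (∑ j, Pi.single i (1 : ℕ) j) = 1 := by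
          simp [Finset.sum_pi_single']
        have : (∑ j, n j) = (∑ j, Pi.single i (1 : ℕ) j) + ∑ j, n' j := by
          rw [← Finset.sum_add_distrib]
          exact Finset.sum_congr rfl fun j _ => by rw [hdec]; rfl
        omega
      have hlt : N - 1 < N := by omega
      have hbig : (⋃ e ∈ Λ.edgesAt v,
          (Λ.comp e) '' {a' : Λ.Path | Λ.rng a' = Λ.src e ∧ Λ.deg a' = n'}).Finite :=
        (hrf v).biUnion fun e _ =>
          ((ih (N - 1) hlt n' hsum' (Λ.src e)).image (Λ.comp e))
      refine hbig.subset ?_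
      rintro a ⟨hra, hda⟩
      obtain ⟨⟨e, a'⟩, ⟨hse, hcomp, hde, hda'⟩, -⟩ :=
        Λ.factor a (Pi.single i 1) n' (by rw [hda, hdec])
      have hre : Λ.rng e = v := by
        rw [← hra, ← hcomp, Λ.rng_comp e a' hse]
      refine Set.mem_biUnion (show e ∈ Λ.edgesAt v from ⟨hre, ⟨i, hde⟩⟩) ?_
      exact ⟨a', ⟨hse.symm, hda'⟩, hcomp⟩

lemma KGraph.minPairs_bijOn {k : ℕ} (Λ : KGraph k) (l m : Λ.Path) :
    Set.BijOn (fun p : Λ.Path × Λ.Path => Λ.comp l p.1)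
      (Λ.MinPairs l m) (Λ.MCE l m) := by
  refine ⟨fun p hp => hp.2.2.2, ?_, ?_⟩
  · rintro p hp q hq h
    have h' : Λ.comp l p.1 = Λ.comp l q.1 := h
    obtain ⟨hp1, hp2, hp3, hpd, -, -⟩ := hp
    obtain ⟨hq1, hq2, hq3, hqd, -, -⟩ := hq
    have hdegp : Λ.deg l + Λ.deg p.1 = Λ.deg l ⊔ Λ.deg m := by
      rw [← Λ.deg_comp l p.1 hp1]; exact hpd
    have hdegq : Λ.deg l + Λ.deg q.1 = Λ.deg l ⊔ Λ.deg m := by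
      rw [← Λ.deg_comp l q.1 hq1]; exact hqd
    have hd1 : Λ.deg q.1 = Λ.deg p.1 := add_left_cancel (hdegq.trans hdegp.symm)
    obtain ⟨w, -, huniq⟩ := Λ.factor (Λ.comp l p.1) (Λ.deg l) (Λ.deg p.1)
      (by rw [Λ.deg_comp l p.1 hp1])
    have e1 : ((l, p.1) : Λ.Path × Λ.Path) = w := huniq (l, p.1) ⟨hp1, rfl, rfl, rfl⟩
    have e2 : ((l, q.1) : Λ.Path × Λ.Path) = w := huniq (l, q.1) ⟨hq1, h'.symm, rfl, hd1⟩
    have h1 : p.1 = q.1 := congrArg Prod.snd (e1.trans e2.symm)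
    -- second components
    have hmq : Λ.comp m p.2 = Λ.comp m q.2 := by rw [← hp3, ← hq3, h']
    have hdegp2 : Λ.deg m + Λ.deg p.2 = Λ.deg l ⊔ Λ.deg m := by
      rw [← Λ.deg_comp m p.2 hp2, ← hp3]; exact hpd
    have hdegq2 : Λ.deg m + Λ.deg q.2 = Λ.deg l ⊔ Λ.deg m := by
      rw [← Λ.deg_comp m q.2 hq2, ← hq3]; exact hqd
    have hd2 : Λ.deg q.2 = Λ.deg p.2 := add_left_cancel (hdegq2.trans hdegp2.symm)
    obtain ⟨w2, -, huniq2⟩ := Λ.factor (Λ.comp m p.2) (Λ.deg m) (Λ.deg p.2)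
      (by rw [Λ.deg_comp m p.2 hp2])
    have f1 : ((m, p.2) : Λ.Path × Λ.Path) = w2 := huniq2 (m, p.2) ⟨hp2, rfl, rfl, rfl⟩
    have f2 : ((m, q.2) : Λ.Path × Λ.Path) = w2 := huniq2 (m, q.2) ⟨hq2, hmq.symm, rfl, hd2⟩
    have h2 : p.2 = q.2 := by
      have hh := f1.trans f2.symm
      rw [Prod.mk.injEq] at hh
      exact hh.2
    exact Prod.ext h1 h2
  · rintro t ht
    obtain ⟨hd, ⟨ν, hν1, hν2⟩, ⟨γ, hγ1, hγ2⟩⟩ := ht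
    refine ⟨(ν, γ), ⟨hν1, hγ1, by rw [hν2, hγ2], ?_⟩, hν2⟩
    rw [hν2]; exact ⟨hd, ⟨ν, hν1, hν2⟩, ⟨γ, hγ1, hγ2⟩⟩

lemma KGraph.mce_comm {k : ℕ} (Λ : KGraph k) (l m : Λ.Path) :
    Λ.MCE l m = Λ.MCE m l := by
  ext t
  simp only [KGraph.MCE, Set.mem_setOf_eq, sup_comm (Λ.deg l) (Λ.deg m)]
  tauto

/-- Proposition: for a Cohn `Λ`-family in an `R`-algebra `A` over a row-finite `k`-graph,
`T_λ T_{λ*} T_μ T_{μ*} = Σ_{λν ∈ MCE(λ,μ)} T_{λν} T_{(λν)*}`, and in particular the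
elements `T_λ T_{λ*}` pairwise commute. -/
theorem cohn_family_mce_formula {k : ℕ} (Λ : KGraph k) (hrf : Λ.RowFinite)
    (R : Type) [CommRing R] (A : Type) [Ring A] [Algebra R A]
    (T Ts : Λ.Path → A) (hT : IsCohnFamily Λ A T Ts) :
    ∀ l m : Λ.Path,
      T l * Ts l * (T m * Ts m) = ∑ᶠ t ∈ Λ.MCE l m, T t * Ts t ∧
      T l * Ts l * (T m * Ts m) = T m * Ts m * (T l * Ts l) := by
  have key : ∀ l m : Λ.Path, T l * Ts l * (T m * Ts m) = ∑ᶠ t ∈ Λ.MCE l m, T t * Ts t := by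
    intro l m
    have hbij := Λ.minPairs_bijOn l m
    have hMCEfin : (Λ.MCE l m).Finite := by
      refine (Λ.finite_paths_aux hrf _ (Λ.deg l ⊔ Λ.deg m) rfl (Λ.rng l)).subset ?_
      rintro t ⟨hd, ⟨ν, hν1, hν2⟩, -⟩
      exact ⟨by rw [← hν2, Λ.rng_comp l ν hν1], hd⟩
    have hMPfin : (Λ.MinPairs l m).Finite :=
      Set.Finite.of_finite_image (hbij.image_eq ▸ hMCEfin) hbij.injOn
    have h1 : T l * Ts l * (T m * Ts m) = T l * ((Ts l * T m) * Ts m) := by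
      simp [mul_assoc]
    rw [h1, hT.cp3 l m, finsum_mem_eq_finite_toFinset_sum _ hMPfin,
      finsum_mem_eq_finite_toFinset_sum _ hMCEfin, Finset.sum_mul, Finset.mul_sum]
    refine Finset.sum_bij (fun p _ => Λ.comp l p.1) ?_ ?_ ?_ ?_
    · intro p hp
      rw [Set.Finite.mem_toFinset] at hp ⊢
      exact hbij.mapsTo hp
    · intro p hp q hq h
      rw [Set.Finite.mem_toFinset] at hp hq
      exact hbij.injOn hp hq h
    · intro t ht
      rw [Set.Finite.mem_toFinset] at ht
      obtain ⟨p, hp, hpt⟩ := hbij.surjOn ht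
      exact ⟨p, Set.Finite.mem_toFinset _ |>.mpr hp, hpt⟩
    · intro p hp
      rw [Set.Finite.mem_toFinset] at hp
      obtain ⟨hp1, hp2, hp3, -⟩ := hp
      calc T l * (T p.1 * Ts p.2 * Ts m)
          = (T l * T p.1) * (Ts p.2 * Ts m) := by simp [mul_assoc]
        _ = T (Λ.comp l p.1) * Ts (Λ.comp m p.2) := by
            rw [hT.mul_comp l p.1 hp1, hT.ghost_mul_comp m p.2 hp2]
        _ = T (Λ.comp l p.1) * Ts (Λ.comp l p.1) := by rw [hp3]
  intro l m
  refine ⟨key l m, ?_⟩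
  rw [key l m, key m l, Λ.mce_comm l m]
end

section
/- Let Λ be a row-finite k-graph and {T_λ, T_{μ*}} a Cohn Λ-family in an R-algebra A. Then the subalgebra of A generated by {T_λ, T_{μ*} : λ, μ ∈ Λ} equals span_R{T_λ T_{μ*} : λ, μ ∈ Λ, s(λ) = s(μ)}. -/
/-- Proposition: the (non-unital) subalgebra of `A` generated by a Cohn `Λ`-family
`{T_λ, T_{μ*}}` equals `span_R {T_λ T_{μ*} : s(λ) = s(μ)}`. -/
theorem cohn_family_span {k : ℕ} (Λ : KGraph k) (hrf : Λ.RowFinite)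
    (R : Type) [CommRing R] (A : Type) [Ring A] [Algebra R A]
    (T Ts : Λ.Path → A) (hT : IsCohnFamily Λ A T Ts) :
    NonUnitalSubalgebra.toSubmodule
        (NonUnitalAlgebra.adjoin R (Set.range T ∪ Set.range Ts)) =
      Submodule.span R
        {x | ∃ a b : Λ.Path, Λ.src a = Λ.src b ∧ x = T a * Ts b} := by
  set S : Set A := {x | ∃ a b : Λ.Path, Λ.src a = Λ.src b ∧ x = T a * Ts b} with hS
  -- generators lie in S
  have hTmem : ∀ a, T a ∈ S := by
    intro a
    refine ⟨a, Λ.src a, (Λ.src_vertex _ (Λ.deg_src a)).symm, ?_⟩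
    rw [hT.ghost_vertex _ (Λ.deg_src a),
      hT.mul_comp a (Λ.src a) (Λ.rng_vertex _ (Λ.deg_src a)).symm,
      Λ.comp_src_self]
  have hTsmem : ∀ b, Ts b ∈ S := by
    intro b
    refine ⟨Λ.src b, b, Λ.src_vertex _ (Λ.deg_src b), ?_⟩
    rw [← hT.ghost_vertex _ (Λ.deg_src b),
      hT.ghost_mul_comp b (Λ.src b) (Λ.rng_vertex _ (Λ.deg_src b)).symm,
      Λ.comp_src_self]
  -- S is closed under products modulo span
  have hmul : ∀ x ∈ S, ∀ y ∈ S, x * y ∈ Submodule.span R S := by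
    rintro _ ⟨a, b, hab, rfl⟩ _ ⟨c, d, hcd, rfl⟩
    have hre : T a * Ts b * (T c * Ts d) = T a * ((Ts b * T c) * Ts d) := by simp [mul_assoc]
    rw [hre, hT.cp3 b c]
    set f : Λ.Path × Λ.Path → A := fun p => T p.1 * Ts p.2 with hf
    by_cases hfin : (Λ.MinPairs b c ∩ Function.support f).Finite
    · rw [finsum_mem_eq_sum f hfin, Finset.sum_mul, Finset.mul_sum]
      refine Submodule.sum_mem _ ?_
      intro p hp
      have hpm : p ∈ Λ.MinPairs b c := (Set.Finite.mem_toFinset hfin |>.mp hp).1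
      obtain ⟨h1, h2, h3, -⟩ := hpm
      have hsa : Λ.src a = Λ.rng p.1 := hab.trans h1
      have hsd : Λ.src d = Λ.rng p.2 := hcd.symm.trans h2
      have key : T a * (f p * Ts d) = T (Λ.comp a p.1) * Ts (Λ.comp d p.2) := by
        rw [hf]
        rw [← hT.mul_comp a p.1 hsa, ← hT.ghost_mul_comp d p.2 hsd]
        simp [mul_assoc]
      rw [key]
      refine Submodule.subset_span ⟨Λ.comp a p.1, Λ.comp d p.2, ?_, rfl⟩
      rw [Λ.src_comp a p.1 hsa, Λ.src_comp d p.2 hsd]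
      have := congrArg Λ.src h3
      rwa [Λ.src_comp b p.1 h1, Λ.src_comp c p.2 h2] at this
    · rw [finsum_mem_eq_zero_of_infinite hfin]
      simp
  have hspanmul : ∀ x y : A, x ∈ Submodule.span R S → y ∈ Submodule.span R S →
      x * y ∈ Submodule.span R S := by
    intro x y hx hy
    have h1 : x * y ∈ Submodule.span R S * Submodule.span R S :=
      Submodule.mul_mem_mul hx hy
    rw [Submodule.span_mul_span] at h1
    refine Submodule.span_le.mpr ?_ h1
    rintro _ ⟨s, hs, t, ht, rfl⟩
    exact hmul s hs t ht
  refine le_antisymm ?_ ?_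
  · have hle : NonUnitalAlgebra.adjoin R (Set.range T ∪ Set.range Ts) ≤
        (Submodule.span R S).toNonUnitalSubalgebra hspanmul := by
      refine NonUnitalAlgebra.adjoin_le ?_
      rintro x (⟨a, rfl⟩ | ⟨b, rfl⟩)
      · exact Submodule.subset_span (hTmem a)
      · exact Submodule.subset_span (hTsmem b)
    exact hle
  · refine Submodule.span_le.mpr ?_
    rintro _ ⟨a, b, -, rfl⟩
    show _ ∈ NonUnitalAlgebra.adjoin R (Set.range T ∪ Set.range Ts)
    exact mul_mem (NonUnitalAlgebra.subset_adjoin R (Or.inl ⟨a, rfl⟩))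
      (NonUnitalAlgebra.subset_adjoin R (Or.inr ⟨b, rfl⟩))
end

section
/- Let Λ be a row-finite k-graph with no sources, W_Λ the set of all degree-preserving functors x : Ω_{k,n} → Λ (n ∈ (ℕ∪{∞})^k), and 𝔽_R(W_Λ) the free R-module on W_Λ. Then the endomorphisms T_v, T_λ, T_{μ*} of 𝔽_R(W_Λ) defined on basis elements by T_v(x) = x if r(x)=v and 0 otherwise, T_λ(x) = λx if s(λ)=r(x) and 0 otherwise, and T_{μ*}(x) = σ^{d(μ)}x if x(0,d(μ)) = μ and 0 otherwise, form a Cohn Λ-family in End(𝔽_R(W_Λ)). -/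
/-- The path space `W_Λ` of a `k`-graph `Λ`: the set of all (finite and infinite)
paths, i.e. degree-preserving functors `x : Ω_{k,n} → Λ` for `n ∈ (ℕ∪{∞})^k`,
presented by its structural operations: range `rW`, degree `dW : W → (ℕ∪{∞})^k`,
concatenation `cons λ x = λx` (for `s(λ) = r(x)`), shift `σ^n x`, initial segment
`seg x n = x(0,n)` (for `n ≤ d(x)`), and the embedding `ofPath` of finite paths. -/
structure PathSpace {k : ℕ} (Λ : KGraph k) where
  W : Type
  rW : W → Λ.Path
  dW : W → Fin k → ℕ∞
  rW_vertex : ∀ x, Λ.IsVertex (rW x)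
  cons : Λ.Path → W → W
  shift : (Fin k → ℕ) → W → W
  seg : W → (Fin k → ℕ) → Λ.Path
  ofPath : Λ.Path → W
  rW_cons : ∀ a x, Λ.src a = rW x → rW (cons a x) = Λ.rng a
  dW_cons : ∀ a x, Λ.src a = rW x →
    dW (cons a x) = fun i => (Λ.deg a i : ℕ∞) + dW x i
  cons_vertex : ∀ v x, Λ.IsVertex v → v = rW x → cons v x = x
  cons_comp : ∀ a b x, Λ.src a = Λ.rng b → Λ.src b = rW x →
    cons (Λ.comp a b) x = cons a (cons b x)
  seg_deg : ∀ x n, (∀ i, (n i : ℕ∞) ≤ dW x i) → Λ.deg (seg x n) = n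
  seg_rng : ∀ x n, (∀ i, (n i : ℕ∞) ≤ dW x i) → Λ.rng (seg x n) = rW x
  seg_zero : ∀ x, seg x 0 = rW x
  cons_seg_shift : ∀ x n, (∀ i, (n i : ℕ∞) ≤ dW x i) →
    cons (seg x n) (shift n x) = x
  rW_shift : ∀ x n, (∀ i, (n i : ℕ∞) ≤ dW x i) → rW (shift n x) = Λ.src (seg x n)
  dW_shift : ∀ x n, (∀ i, (n i : ℕ∞) ≤ dW x i) →
    dW (shift n x) = fun i => dW x i - (n i : ℕ∞)
  shift_zero : ∀ x, shift 0 x = x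
  shift_shift : ∀ x m n, (∀ i, ((m i + n i : ℕ) : ℕ∞) ≤ dW x i) →
    shift n (shift m x) = shift (m + n) x
  seg_cons : ∀ a x, Λ.src a = rW x → seg (cons a x) (Λ.deg a) = a
  shift_cons : ∀ a x, Λ.src a = rW x → shift (Λ.deg a) (cons a x) = x
  rW_ofPath : ∀ a, rW (ofPath a) = Λ.rng a
  dW_ofPath : ∀ a, dW (ofPath a) = fun i => (Λ.deg a i : ℕ∞)
  seg_ofPath : ∀ a, seg (ofPath a) (Λ.deg a) = a

open scoped Classical

/-- The endomorphism `T_λ` of the free module `𝔽_R(W_Λ)`: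
`T_λ(x) = λx` if `s(λ) = r(x)` and `0` otherwise (for a vertex `v` this is
`T_v(x) = x` if `r(x) = v` and `0` otherwise). -/
noncomputable def repT {k : ℕ} {Λ : KGraph k} (P : PathSpace Λ) (R : Type)
    [CommRing R] (a : Λ.Path) : Module.End R (P.W →₀ R) :=
  Finsupp.lsum R fun x =>
    if Λ.src a = P.rW x then (Finsupp.lsingle (P.cons a x) : R →ₗ[R] (P.W →₀ R))
    else 0

/-- The endomorphism `T_{μ*}` of the free module `𝔽_R(W_Λ)`:
`T_{μ*}(x) = σ^{d(μ)} x` if `x(0, d(μ)) = μ` and `0` otherwise. -/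
noncomputable def repTs {k : ℕ} {Λ : KGraph k} (P : PathSpace Λ) (R : Type)
    [CommRing R] (a : Λ.Path) : Module.End R (P.W →₀ R) :=
  Finsupp.lsum R fun x =>
    if (∀ i, (Λ.deg a i : ℕ∞) ≤ P.dW x i) ∧ P.seg x (Λ.deg a) = a then
      (Finsupp.lsingle (P.shift (Λ.deg a) x) : R →ₗ[R] (P.W →₀ R))
    else 0


section CohnHelpers

-- ENat arithmetic helpers
lemma enat_add_le {m n : ℕ} {N : ℕ∞} (h1 : (m : ℕ∞) ≤ N) (h2 : (n : ℕ∞) ≤ N - m) :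
    ((m + n : ℕ) : ℕ∞) ≤ N := by
  induction N using ENat.recTopCoe with
  | top => exact le_top
  | coe K =>
      rw [← ENat.coe_sub] at h2
      rw [ENat.coe_le_coe] at *
      omega

lemma enat_max_le {m n : ℕ} {N : ℕ∞} (h1 : (m : ℕ∞) ≤ N) (h2 : (n : ℕ∞) ≤ N) :
    ((max m n : ℕ) : ℕ∞) ≤ N := by
  rcases le_total m n with h | h
  · rwa [Nat.max_eq_right h]
  · rwa [Nat.max_eq_left h]

variable {k : ℕ} {Λ : KGraph k}

-- basic evaluation lemmas
lemma repT_single (P : PathSpace Λ) (R : Type) [CommRing R] (a : Λ.Path) (x : P.W) (r : R) :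
    repT P R a (Finsupp.single x r) =
      if Λ.src a = P.rW x then Finsupp.single (P.cons a x) r else 0 := by
  rw [repT, Finsupp.lsum_single]
  split_ifs <;> simp

lemma repTs_single (P : PathSpace Λ) (R : Type) [CommRing R] (a : Λ.Path) (x : P.W) (r : R) :
    repTs P R a (Finsupp.single x r) =
      if (∀ i, (Λ.deg a i : ℕ∞) ≤ P.dW x i) ∧ P.seg x (Λ.deg a) = a then
        Finsupp.single (P.shift (Λ.deg a) x) r else 0 := by
  rw [repTs, Finsupp.lsum_single]
  split_ifs <;> simp

-- path-space helpers
lemma le_dW_cons (P : PathSpace Λ) (u : Λ.Path) (y : P.W) (h : Λ.src u = P.rW y) :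
    ∀ i, (Λ.deg u i : ℕ∞) ≤ P.dW (P.cons u y) i := by
  intro i
  rw [P.dW_cons u y h]
  exact le_self_add

lemma cons_decomp (P : PathSpace Λ) (u w : Λ.Path) (y : P.W)
    (hu : Λ.src u = Λ.rng w) (hw : Λ.src w = P.rW y) :
    P.seg (P.cons (Λ.comp u w) y) (Λ.deg u) = u ∧
    P.shift (Λ.deg u) (P.cons (Λ.comp u w) y) = P.cons w y ∧
    (∀ i, (Λ.deg u i : ℕ∞) ≤ P.dW (P.cons (Λ.comp u w) y) i) := by
  have h2 : Λ.src u = P.rW (P.cons w y) := by rw [P.rW_cons w y hw]; exact hu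
  rw [P.cons_comp u w y hu hw]
  exact ⟨P.seg_cons u _ h2, P.shift_cons u _ h2, le_dW_cons P u _ h2⟩

-- finiteness of path sets
lemma pathsOf_finite (hrf : Λ.RowFinite) :
    ∀ (n : ℕ) (m : Fin k → ℕ), (∑ i, m i) = n → ∀ v : Λ.Path,
      Set.Finite {a : Λ.Path | Λ.rng a = v ∧ Λ.deg a = m} := by
  intro n
  induction n using Nat.strong_induction_on with
  | _ n ih =>
    intro m hm v
    by_cases h0 : m = 0
    · subst h0
      apply Set.Finite.subset (Set.finite_singleton v)
      rintro a ⟨h1, h2⟩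
      have hv := Λ.rng_vertex a h2
      rw [Set.mem_singleton_iff, ← h1, hv]
    · obtain ⟨i, hi⟩ : ∃ i, m i ≠ 0 := by
        by_contra h
        push_neg at h
        exact h0 (funext fun j => h j)
      have hone : (Pi.single i 1 : Fin k → ℕ) i = 1 := by simp
      have hsplit : m = Pi.single i 1 + (fun j => m j - (Pi.single i 1 : Fin k → ℕ) j) := by
        funext j
        by_cases hj : j = i
        · subst hj
          simp only [Pi.add_apply, hone]
          omega
        · have : (Pi.single i 1 : Fin k → ℕ) j = 0 := Pi.single_eq_of_ne hj 1
          simp only [Pi.add_apply, this]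
          omega
      have hlt : (∑ j, (m j - (Pi.single i 1 : Fin k → ℕ) j)) < n := by
        rw [← hm]
        apply Finset.sum_lt_sum
        · intro j _; omega
        · exact ⟨i, Finset.mem_univ i, by rw [hone]; omega⟩
      have hfin : Set.Finite (⋃ e ∈ Λ.edgesAt v,
          (fun a' => Λ.comp e a') ''
            {a' : Λ.Path | Λ.rng a' = Λ.src e ∧ Λ.deg a' = fun j => m j - (Pi.single i 1 : Fin k → ℕ) j}) :=
        Set.Finite.biUnion (hrf v) (fun e _ => (ih _ hlt _ rfl (Λ.src e)).image _)
      apply hfin.subset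
      rintro a ⟨hr, hd⟩
      obtain ⟨⟨e, a'⟩, ⟨hse, hce, hde, hda⟩, -⟩ :=
        Λ.factor a (Pi.single i 1) (fun j => m j - (Pi.single i 1 : Fin k → ℕ) j) (by rw [hd]; exact hsplit)
      have hrng_e : Λ.rng e = v := by rw [← hr, ← hce, Λ.rng_comp e a' hse]
      exact Set.mem_biUnion (show e ∈ Λ.edgesAt v from ⟨hrng_e, i, hde⟩)
        ⟨a', ⟨hse.symm, hda⟩, hce⟩

lemma mce_finite (hrf : Λ.RowFinite) (a b : Λ.Path) : (Λ.MCE a b).Finite := by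
  apply (pathsOf_finite hrf _ (Λ.deg a ⊔ Λ.deg b) rfl (Λ.rng a)).subset
  rintro t ⟨hdt, ⟨ν, hν1, hν2⟩, -⟩
  exact ⟨by rw [← hν2, Λ.rng_comp a ν hν1], hdt⟩

lemma minpairs_finite (hrf : Λ.RowFinite) (a b : Λ.Path) : (Λ.MinPairs a b).Finite := by
  have hinj : Set.InjOn (fun p : Λ.Path × Λ.Path => Λ.comp a p.1) (Λ.MinPairs a b) := by
    rintro p hp q hq h
    obtain ⟨hp1, hp2, hp3, hpm⟩ := hp
    obtain ⟨hq1, hq2, hq3, hqm⟩ := hq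
    simp only at h
    have hd : Λ.deg q.1 = Λ.deg p.1 := by
      have d1 := Λ.deg_comp a p.1 hp1
      have d2 := Λ.deg_comp a q.1 hq1
      rw [h, d2] at d1
      funext j
      have := congrFun d1 j
      simp only [Pi.add_apply] at this
      omega
    obtain ⟨pp, -, hu⟩ := Λ.factor (Λ.comp a p.1) (Λ.deg a) (Λ.deg p.1) (Λ.deg_comp a p.1 hp1)
    have e1 := hu (a, p.1) ⟨hp1, rfl, rfl, rfl⟩
    have e2 := hu (a, q.1) ⟨hq1, h.symm, rfl, hd⟩
    have hfst : p.1 = q.1 := (Prod.ext_iff.mp (e1.trans e2.symm)).2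
    have hbb : Λ.comp b p.2 = Λ.comp b q.2 := by rw [← hp3, ← hq3, h]
    have hd2 : Λ.deg q.2 = Λ.deg p.2 := by
      have d1 := Λ.deg_comp b p.2 hp2
      have d2 := Λ.deg_comp b q.2 hq2
      rw [hbb, d2] at d1
      funext j
      have := congrFun d1 j
      simp only [Pi.add_apply] at this
      omega
    obtain ⟨qq, -, hu2⟩ := Λ.factor (Λ.comp b p.2) (Λ.deg b) (Λ.deg p.2) (Λ.deg_comp b p.2 hp2)
    have f1 := hu2 (b, p.2) ⟨hp2, rfl, rfl, rfl⟩
    have f2 := hu2 (b, q.2) ⟨hq2, hbb.symm, rfl, hd2⟩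
    have hsnd : p.2 = q.2 := (Prod.ext_iff.mp (f1.trans f2.symm)).2
    exact Prod.ext hfst hsnd
  have himg : (fun p : Λ.Path × Λ.Path => Λ.comp a p.1) '' (Λ.MinPairs a b) ⊆ Λ.MCE a b := by
    rintro _ ⟨p, hp, rfl⟩
    exact hp.2.2.2
  exact Set.Finite.of_finite_image ((mce_finite hrf a b).subset himg) hinj

end CohnHelpers

section CoreHelpers

variable {k : ℕ} {Λ : KGraph k}

/-- Decomposition of the condition for `T_{(ab)*}` into the two-step condition. -/
lemma condC_decomp (P : PathSpace Λ) (a b : Λ.Path) (hab : Λ.src a = Λ.rng b) (x : P.W)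
    (hle : ∀ i, (Λ.deg (Λ.comp a b) i : ℕ∞) ≤ P.dW x i)
    (hseg : P.seg x (Λ.deg (Λ.comp a b)) = Λ.comp a b) :
    (∀ i, (Λ.deg a i : ℕ∞) ≤ P.dW x i) ∧ P.seg x (Λ.deg a) = a ∧
    (∀ i, (Λ.deg b i : ℕ∞) ≤ P.dW (P.shift (Λ.deg a) x) i) ∧
    P.seg (P.shift (Λ.deg a) x) (Λ.deg b) = b ∧
    P.shift (Λ.deg b) (P.shift (Λ.deg a) x) = P.shift (Λ.deg (Λ.comp a b)) x := by
  have hx := P.cons_seg_shift x _ hle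
  rw [hseg] at hx
  have hsb : Λ.src b = P.rW (P.shift (Λ.deg (Λ.comp a b)) x) := by
    rw [P.rW_shift x _ hle, hseg, Λ.src_comp a b hab]
  obtain ⟨h1, h2, h3⟩ := cons_decomp P a b (P.shift (Λ.deg (Λ.comp a b)) x) hab hsb
  rw [hx] at h1 h2
  simp only [hx] at h3
  refine ⟨h3, h1, ?_, ?_, ?_⟩
  · simp only [h2]
    exact le_dW_cons P b _ hsb
  · rw [h2]
    exact P.seg_cons b _ hsb
  · rw [h2]
    exact P.shift_cons b _ hsb

/-- Composition of the two-step condition into the condition for `T_{(ab)*}`. -/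
lemma condC_comp (P : PathSpace Λ) (a b : Λ.Path) (hab : Λ.src a = Λ.rng b) (x : P.W)
    (ha1 : ∀ i, (Λ.deg a i : ℕ∞) ≤ P.dW x i) (ha2 : P.seg x (Λ.deg a) = a)
    (hb1 : ∀ i, (Λ.deg b i : ℕ∞) ≤ P.dW (P.shift (Λ.deg a) x) i)
    (hb2 : P.seg (P.shift (Λ.deg a) x) (Λ.deg b) = b) :
    (∀ i, (Λ.deg (Λ.comp a b) i : ℕ∞) ≤ P.dW x i) ∧
    P.seg x (Λ.deg (Λ.comp a b)) = Λ.comp a b ∧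
    P.shift (Λ.deg b) (P.shift (Λ.deg a) x) = P.shift (Λ.deg (Λ.comp a b)) x := by
  have hadd : ∀ i, ((Λ.deg a i + Λ.deg b i : ℕ) : ℕ∞) ≤ P.dW x i := by
    intro i
    apply enat_add_le (ha1 i)
    have h := hb1 i
    rw [P.dW_shift x _ ha1] at h
    exact h
  have hy : P.cons a (P.shift (Λ.deg a) x) = x := by
    have := P.cons_seg_shift x _ ha1
    rwa [ha2] at this
  have hz : P.cons b (P.shift (Λ.deg b) (P.shift (Λ.deg a) x)) = P.shift (Λ.deg a) x := by
    have := P.cons_seg_shift (P.shift (Λ.deg a) x) _ hb1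
    rwa [hb2] at this
  have hsbz : Λ.src b = P.rW (P.shift (Λ.deg b) (P.shift (Λ.deg a) x)) := by
    rw [P.rW_shift _ _ hb1, hb2]
  have hx2 : x = P.cons (Λ.comp a b) (P.shift (Λ.deg b) (P.shift (Λ.deg a) x)) := by
    rw [P.cons_comp a b _ hab hsbz, hz, hy]
  have hsc : Λ.src (Λ.comp a b) = P.rW (P.shift (Λ.deg b) (P.shift (Λ.deg a) x)) := by
    rw [Λ.src_comp a b hab]
    exact hsbz
  refine ⟨?_, ?_, ?_⟩
  · intro i
    rw [Λ.deg_comp a b hab]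
    have := hadd i
    push_cast at this ⊢
    exact this
  · have := P.seg_cons (Λ.comp a b) _ hsc
    rw [← hx2] at this
    exact this
  · rw [Λ.deg_comp a b hab]
    exact P.shift_shift x (Λ.deg a) (Λ.deg b) hadd

/-- Core computation for a minimal pair acting nontrivially. -/
lemma core (P : PathSpace Λ) (a b : Λ.Path) (p : Λ.Path × Λ.Path) (hp : p ∈ Λ.MinPairs a b)
    (x : P.W) (h1 : ∀ i, (Λ.deg p.2 i : ℕ∞) ≤ P.dW x i)
    (h2 : P.seg x (Λ.deg p.2) = p.2) :
    Λ.src b = P.rW x ∧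
    (∀ i, (Λ.deg a i : ℕ∞) ≤ P.dW (P.cons b x) i) ∧
    P.seg (P.cons b x) (Λ.deg a) = a ∧
    Λ.src p.1 = P.rW (P.shift (Λ.deg p.2) x) ∧
    P.shift (Λ.deg a) (P.cons b x) = P.cons p.1 (P.shift (Λ.deg p.2) x) ∧
    P.cons b x = P.cons (Λ.comp a p.1) (P.shift (Λ.deg p.2) x) ∧
    P.seg (P.cons b x) (Λ.deg a ⊔ Λ.deg b) = Λ.comp a p.1 := by
  obtain ⟨hpa, hpb, hpe, hdt, -⟩ := hp
  have hry : P.rW (P.shift (Λ.deg p.2) x) = Λ.src p.2 := by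
    rw [P.rW_shift x _ h1, h2]
  have hsr := P.seg_rng x (Λ.deg p.2) h1
  rw [h2] at hsr
  have hbx : Λ.src b = P.rW x := hpb.trans hsr
  have hx := P.cons_seg_shift x (Λ.deg p.2) h1
  rw [h2] at hx
  have hst : Λ.src (Λ.comp a p.1) = Λ.src p.2 := by
    rw [hpe, Λ.src_comp b p.2 hpb]
  have hcx : P.cons b x = P.cons (Λ.comp a p.1) (P.shift (Λ.deg p.2) x) := by
    conv_lhs => rw [← hx]
    rw [← P.cons_comp b p.2 _ hpb hry.symm, hpe]
  have hsp1 : Λ.src p.1 = P.rW (P.shift (Λ.deg p.2) x) := by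
    rw [← Λ.src_comp a p.1 hpa, hst, hry]
  obtain ⟨hseg, hshift, hle⟩ := cons_decomp P a p.1 (P.shift (Λ.deg p.2) x) hpa hsp1
  rw [← hcx] at hseg hshift
  simp only [← hcx] at hle
  have hsrc_t : Λ.src (Λ.comp a p.1) = P.rW (P.shift (Λ.deg p.2) x) := by
    rw [hst, hry]
  have hseg_t := P.seg_cons (Λ.comp a p.1) _ hsrc_t
  rw [hdt, ← hcx] at hseg_t
  exact ⟨hbx, hle, hseg, hsp1, hshift, hcx, hseg_t⟩

/-- Existence of a minimal pair acting nontrivially when the left side acts nontrivially. -/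
lemma exist_pair (P : PathSpace Λ) (a b : Λ.Path) (x : P.W)
    (hb : Λ.src b = P.rW x)
    (hda : ∀ i, (Λ.deg a i : ℕ∞) ≤ P.dW (P.cons b x) i)
    (hsg : P.seg (P.cons b x) (Λ.deg a) = a) :
    ∃ p ∈ Λ.MinPairs a b,
      (∀ i, (Λ.deg p.2 i : ℕ∞) ≤ P.dW x i) ∧ P.seg x (Λ.deg p.2) = p.2 := by
  have hmle : ∀ i, (((Λ.deg a ⊔ Λ.deg b) i : ℕ) : ℕ∞) ≤ P.dW (P.cons b x) i := by
    intro i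
    have h2 : (Λ.deg b i : ℕ∞) ≤ P.dW (P.cons b x) i := le_dW_cons P b x hb i
    have hmax : (Λ.deg a ⊔ Λ.deg b) i = max (Λ.deg a i) (Λ.deg b i) := rfl
    rw [hmax]
    exact enat_max_le (hda i) h2
  have hdt : Λ.deg (P.seg (P.cons b x) (Λ.deg a ⊔ Λ.deg b)) = Λ.deg a ⊔ Λ.deg b :=
    P.seg_deg _ _ hmle
  have hy : P.cons (P.seg (P.cons b x) (Λ.deg a ⊔ Λ.deg b))
      (P.shift (Λ.deg a ⊔ Λ.deg b) (P.cons b x)) = P.cons b x :=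
    P.cons_seg_shift _ _ hmle
  have hrt : P.rW (P.shift (Λ.deg a ⊔ Λ.deg b) (P.cons b x)) =
      Λ.src (P.seg (P.cons b x) (Λ.deg a ⊔ Λ.deg b)) :=
    P.rW_shift _ _ hmle
  set t := P.seg (P.cons b x) (Λ.deg a ⊔ Λ.deg b) with ht
  set y := P.shift (Λ.deg a ⊔ Λ.deg b) (P.cons b x) with hy'
  -- factor t = a · ν
  have hd1 : Λ.deg t = Λ.deg a + (fun j => (Λ.deg a ⊔ Λ.deg b) j - Λ.deg a j) := by
    rw [hdt]
    funext j
    have hle1 : Λ.deg a j ≤ (Λ.deg a ⊔ Λ.deg b) j := le_sup_left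
    simp only [Pi.add_apply]
    omega
  obtain ⟨⟨u, ν⟩, ⟨huv, hcomp, hdu, hdν⟩, -⟩ := Λ.factor t (Λ.deg a) _ hd1
  dsimp only at huv hcomp hdu hdν
  have hsν : Λ.src ν = P.rW y := by
    rw [hrt, ← hcomp, Λ.src_comp u ν huv]
  obtain ⟨hsegu, hshiftu, -⟩ := cons_decomp P u ν y huv hsν
  rw [hcomp, hy] at hsegu hshiftu
  have hua : u = a := by rw [← hsegu, hdu, hsg]
  -- factor t = b · γ
  have hd2 : Λ.deg t = Λ.deg b + (fun j => (Λ.deg a ⊔ Λ.deg b) j - Λ.deg b j) := by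
    rw [hdt]
    funext j
    have hle1 : Λ.deg b j ≤ (Λ.deg a ⊔ Λ.deg b) j := le_sup_right
    simp only [Pi.add_apply]
    omega
  obtain ⟨⟨w, γ⟩, ⟨hwγ, hcomp2, hdw, hdγ⟩, -⟩ := Λ.factor t (Λ.deg b) _ hd2
  dsimp only at hwγ hcomp2 hdw hdγ
  have hsγ : Λ.src γ = P.rW y := by
    rw [hrt, ← hcomp2, Λ.src_comp w γ hwγ]
  obtain ⟨hsegw, hshiftw, -⟩ := cons_decomp P w γ y hwγ hsγ
  rw [hcomp2, hy] at hsegw hshiftw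
  have hwb : w = b := by
    rw [← hsegw, hdw]
    exact P.seg_cons b x hb
  rw [hua] at huv hcomp
  rw [hwb] at hwγ hcomp2 hshiftw
  have hshb := P.shift_cons b x hb
  have hxγ : x = P.cons γ y := by rw [← hshb, hshiftw]
  refine ⟨(ν, γ), ⟨huv, hwγ, by rw [hcomp, hcomp2], ?_⟩, ?_, ?_⟩
  · exact ⟨by rw [hcomp, hdt], ⟨ν, huv, rfl⟩, ⟨γ, hwγ, hcomp2.trans hcomp.symm⟩⟩
  · simp only [hxγ]
    exact le_dW_cons P γ y hsγ
  · rw [hxγ]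
    exact P.seg_cons γ y hsγ

/-- Uniqueness of the minimal pair acting nontrivially. -/
lemma uniq_pair (P : PathSpace Λ) (a b : Λ.Path) (x : P.W) (p q : Λ.Path × Λ.Path)
    (hp : p ∈ Λ.MinPairs a b) (hq : q ∈ Λ.MinPairs a b)
    (hp1 : ∀ i, (Λ.deg p.2 i : ℕ∞) ≤ P.dW x i) (hp2 : P.seg x (Λ.deg p.2) = p.2)
    (hq1 : ∀ i, (Λ.deg q.2 i : ℕ∞) ≤ P.dW x i) (hq2 : P.seg x (Λ.deg q.2) = q.2) :
    p = q := by
  obtain ⟨-, -, -, -, -, -, hseg_p⟩ := core P a b p hp x hp1 hp2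
  obtain ⟨-, -, -, -, -, -, hseg_q⟩ := core P a b q hq x hq1 hq2
  have ht : Λ.comp a p.1 = Λ.comp a q.1 := by rw [← hseg_p, ← hseg_q]
  have hbb : Λ.comp b p.2 = Λ.comp b q.2 := by rw [← hp.2.2.1, ← hq.2.2.1, ht]
  have hdp : Λ.deg q.1 = Λ.deg p.1 := by
    have d1 := Λ.deg_comp a p.1 hp.1
    have d2 := Λ.deg_comp a q.1 hq.1
    rw [ht, d2] at d1
    funext j
    have := congrFun d1 j
    simp only [Pi.add_apply] at this
    omega
  obtain ⟨pp, -, hu⟩ := Λ.factor (Λ.comp a p.1) (Λ.deg a) (Λ.deg p.1) (Λ.deg_comp a p.1 hp.1)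
  have e1 := hu (a, p.1) ⟨hp.1, rfl, rfl, rfl⟩
  have e2 := hu (a, q.1) ⟨hq.1, ht.symm, rfl, hdp⟩
  have hdp2 : Λ.deg q.2 = Λ.deg p.2 := by
    have d1 := Λ.deg_comp b p.2 hp.2.1
    have d2 := Λ.deg_comp b q.2 hq.2.1
    rw [hbb, d2] at d1
    funext j
    have := congrFun d1 j
    simp only [Pi.add_apply] at this
    omega
  obtain ⟨qq, -, hu2⟩ := Λ.factor (Λ.comp b p.2) (Λ.deg b) (Λ.deg p.2) (Λ.deg_comp b p.2 hp.2.1)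
  have f1 := hu2 (b, p.2) ⟨hp.2.1, rfl, rfl, rfl⟩
  have f2 := hu2 (b, q.2) ⟨hq.2.1, hbb.symm, rfl, hdp2⟩
  exact Prod.ext (Prod.ext_iff.mp (e1.trans e2.symm)).2 (Prod.ext_iff.mp (f1.trans f2.symm)).2

end CoreHelpers
/-- Proposition: the endomorphisms `T_v, T_λ, T_{μ*}` of the free `R`-module
`𝔽_R(W_Λ)`, defined on basis elements by `T_v(x) = x` iff `r(x) = v`,
`T_λ(x) = λx` iff `s(λ) = r(x)`, and `T_{μ*}(x) = σ^{d(μ)}x` iff `x(0,d(μ)) = μ`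
(and `0` otherwise), form a Cohn `Λ`-family in `End(𝔽_R(W_Λ))`. -/
theorem path_representation_is_cohn_family {k : ℕ} (Λ : KGraph k)
    (hrf : Λ.RowFinite) (hns : Λ.NoSources) (P : PathSpace Λ)
    (R : Type) [CommRing R] :
    IsCohnFamily Λ (Module.End R (P.W →₀ R)) (repT P R) (repTs P R) ∧
      (∀ v x, Λ.IsVertex v →
        repT P R v (Finsupp.single x 1) =
          if P.rW x = v then Finsupp.single x (1 : R) else 0) ∧
      (∀ a x, repT P R a (Finsupp.single x 1) =
          if Λ.src a = P.rW x then Finsupp.single (P.cons a x) (1 : R) else 0) ∧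
      (∀ a x, repTs P R a (Finsupp.single x 1) =
          if (∀ i, (Λ.deg a i : ℕ∞) ≤ P.dW x i) ∧ P.seg x (Λ.deg a) = a then
            Finsupp.single (P.shift (Λ.deg a) x) (1 : R) else 0) := by
  refine ⟨⟨?_, ?_, ?_, ?_, ?_, ?_⟩, ?_, ?_, ?_⟩
  · -- ghost_vertex
    intro v hv
    have hd0 : Λ.deg v = 0 := hv
    have hsv : Λ.src v = v := Λ.src_vertex v hv
    apply Finsupp.lhom_ext
    intro x r
    rw [repT_single, repTs_single]
    by_cases h : Λ.src v = P.rW x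
    · rw [if_pos h, if_pos ?_]
      · rw [hd0, P.shift_zero, P.cons_vertex v x hv (by rw [← hsv]; exact h)]
      · refine ⟨fun i => by rw [hd0]; simp, ?_⟩
        rw [hd0, P.seg_zero, ← h, hsv]
    · rw [if_neg h, if_neg]
      rintro ⟨-, h2⟩
      apply h
      rw [← h2, hd0, P.seg_zero]
      exact Λ.src_vertex _ (P.rW_vertex x)
  · -- vertex_idem
    intro v hv
    apply Finsupp.lhom_ext
    intro x r
    rw [Module.End.mul_apply]
    conv_lhs => rw [repT_single]
    by_cases h : Λ.src v = P.rW x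
    · rw [if_pos h, P.cons_vertex v x hv (by rw [← Λ.src_vertex v hv]; exact h)]
    · rw [if_neg h, map_zero, repT_single, if_neg h]
  · -- vertex_orth
    intro v w hv hw hne
    apply Finsupp.lhom_ext
    intro x r
    rw [Module.End.mul_apply, LinearMap.zero_apply, repT_single]
    by_cases h : Λ.src w = P.rW x
    · rw [if_pos h, P.cons_vertex w x hw (by rw [← Λ.src_vertex w hw]; exact h),
        repT_single, if_neg]
      intro hvx
      apply hne
      rw [Λ.src_vertex v hv] at hvx
      rw [Λ.src_vertex w hw] at h
      rw [hvx, ← h]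
    · rw [if_neg h, map_zero]
  · -- mul_comp
    intro a b hab
    apply Finsupp.lhom_ext
    intro x r
    rw [Module.End.mul_apply, repT_single P R b, repT_single P R (Λ.comp a b)]
    by_cases h : Λ.src b = P.rW x
    · have h2 : Λ.src a = P.rW (P.cons b x) := by rw [P.rW_cons b x h]; exact hab
      rw [if_pos h, repT_single, if_pos h2,
        if_pos (by rw [Λ.src_comp a b hab]; exact h), P.cons_comp a b x hab h]
    · rw [if_neg h, map_zero, if_neg (by rw [Λ.src_comp a b hab]; exact h)]
  · -- ghost_mul_comp
    intro a b hab
    apply Finsupp.lhom_ext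
    intro x r
    rw [Module.End.mul_apply, repTs_single P R a, repTs_single P R (Λ.comp a b)]
    by_cases hA : (∀ i, (Λ.deg a i : ℕ∞) ≤ P.dW x i) ∧ P.seg x (Λ.deg a) = a
    · rw [if_pos hA, repTs_single]
      by_cases hB : (∀ i, (Λ.deg b i : ℕ∞) ≤ P.dW (P.shift (Λ.deg a) x) i) ∧
          P.seg (P.shift (Λ.deg a) x) (Λ.deg b) = b
      · obtain ⟨hc1, hc2, hc3⟩ := condC_comp P a b hab x hA.1 hA.2 hB.1 hB.2
        rw [if_pos hB, if_pos ⟨hc1, hc2⟩, hc3]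
      · rw [if_neg hB, if_neg]
        intro hC
        obtain ⟨-, -, d3, d4, -⟩ := condC_decomp P a b hab x hC.1 hC.2
        exact hB ⟨d3, d4⟩
    · rw [if_neg hA, map_zero, if_neg]
      intro hC
      obtain ⟨d1, d2, -⟩ := condC_decomp P a b hab x hC.1 hC.2
      exact hA ⟨d1, d2⟩
  · -- cp3
    intro a b
    have hS : (Λ.MinPairs a b).Finite := minpairs_finite hrf a b
    rw [← hS.coe_toFinset, finsum_mem_coe_finset]
    apply Finsupp.lhom_ext
    intro x r
    rw [Module.End.mul_apply, LinearMap.sum_apply]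
    have hterm : ∀ p ∈ hS.toFinset,
        (repT P R p.1 * repTs P R p.2) (Finsupp.single x r) =
          if (∀ i, (Λ.deg p.2 i : ℕ∞) ≤ P.dW x i) ∧ P.seg x (Λ.deg p.2) = p.2 ∧
              Λ.src p.1 = P.rW (P.shift (Λ.deg p.2) x) then
            Finsupp.single (P.cons p.1 (P.shift (Λ.deg p.2) x)) r else 0 := by
      intro p _
      rw [Module.End.mul_apply, repTs_single]
      by_cases h1 : (∀ i, (Λ.deg p.2 i : ℕ∞) ≤ P.dW x i) ∧ P.seg x (Λ.deg p.2) = p.2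
      · rw [if_pos h1, repT_single]
        by_cases h2 : Λ.src p.1 = P.rW (P.shift (Λ.deg p.2) x)
        · rw [if_pos h2, if_pos ⟨h1.1, h1.2, h2⟩]
        · rw [if_neg h2, if_neg (fun hc => h2 hc.2.2)]
      · rw [if_neg h1, map_zero, if_neg (fun hc => h1 ⟨hc.1, hc.2.1⟩)]
    rw [repT_single]
    by_cases hb : Λ.src b = P.rW x
    · rw [if_pos hb, repTs_single]
      by_cases hA : (∀ i, (Λ.deg a i : ℕ∞) ≤ P.dW (P.cons b x) i) ∧
          P.seg (P.cons b x) (Λ.deg a) = a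
      · obtain ⟨p0, hp0, hc1, hc2⟩ := exist_pair P a b x hb hA.1 hA.2
        have hsum : ∑ p ∈ hS.toFinset,
            (repT P R p.1 * repTs P R p.2) (Finsupp.single x r) =
              (repT P R p0.1 * repTs P R p0.2) (Finsupp.single x r) := by
          apply Finset.sum_eq_single_of_mem p0 (hS.mem_toFinset.mpr hp0)
          intro q hq hne
          rw [hterm q hq, if_neg]
          rintro ⟨hq1, hq2, -⟩
          exact hne (uniq_pair P a b x q p0 (hS.mem_toFinset.mp hq) hp0 hq1 hq2 hc1 hc2)
        obtain ⟨-, -, -, h4, h5, -⟩ := core P a b p0 hp0 x hc1 hc2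
        rw [if_pos hA, hsum, hterm p0 (hS.mem_toFinset.mpr hp0), if_pos ⟨hc1, hc2, h4⟩, h5]
      · rw [if_neg hA]
        symm
        apply Finset.sum_eq_zero
        intro q hq
        rw [hterm q hq, if_neg]
        rintro ⟨h1, h2, -⟩
        obtain ⟨-, c2, c3, -⟩ := core P a b q (hS.mem_toFinset.mp hq) x h1 h2
        exact hA ⟨c2, c3⟩
    · rw [if_neg hb, map_zero]
      symm
      apply Finset.sum_eq_zero
      intro q hq
      rw [hterm q hq, if_neg]
      rintro ⟨h1, h2, -⟩
      obtain ⟨c1, -⟩ := core P a b q (hS.mem_toFinset.mp hq) x h1 h2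
      exact hb c1
  · -- repT on vertices
    intro v x hv
    have hsv := Λ.src_vertex v hv
    rw [repT_single]
    by_cases h : P.rW x = v
    · rw [if_pos (by rw [hsv, h]), if_pos h, P.cons_vertex v x hv h.symm]
    · rw [if_neg (by rw [hsv]; exact fun hh => h hh.symm), if_neg h]
  · -- repT formula
    intro a x
    exact repT_single P R a x 1
  · -- repTs formula
    intro a x
    exact repTs_single P R a x 1
end

section
/- With the path representation Cohn Λ-family {T_λ, T_{μ*}} on the free module 𝔽_R(W_Λ), for every r ∈ R \ {0} and every vertex v ∈ Λ⁰, one has r T_v ≠ 0 and r ∏_{e ∈ vΛ¹}(T_v - T_e T_{e*}) ≠ 0. -/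
open scoped Classical

/-! The finite path `v ∈ W_Λ` witnesses both claims: `T_v` fixes it, and each
`T_{e*}` with `e ∈ vΛ¹` kills it because `v` has degree `0` while `e` has a positive
degree, so every factor `T_v - T_e T_{e*}` fixes it too. -/

section FixedVector

variable {R M : Type} [AddCommMonoid M]

theorem List.prod_apply_eq_self_of_forall [Semiring R] [Module R M]
    {l : List (Module.End R M)} {y : M} (hl : ∀ f ∈ l, f y = y) : l.prod y = y := by
  induction l with
  | nil => rfl
  | cons f l ih =>
    rw [List.prod_cons, Module.End.mul_apply,
      ih fun g hg => hl g (List.mem_cons_of_mem f hg), hl f List.mem_cons_self]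

theorem listProd_apply_eq_self_of_forall [Semiring R] [Module R M] {ι : Type} {s : Finset ι}
    {f : ι → Module.End R M} {y : M} (hs : ∀ i ∈ s, f i y = y) :
    listProd s f y = y :=
  List.prod_apply_eq_self_of_forall <| by
    simpa only [List.mem_map, Finset.mem_toList, forall_exists_index, and_imp,
      forall_apply_eq_imp_iff₂] using hs

theorem Module.End.smul_ne_zero_of_apply_eq_self [CommSemiring R] [Module R M]
    {f : Module.End R M} {y : M} {r : R} (hfy : f y = y) (hry : r • y ≠ 0) : r • f ≠ 0 := by
  intro h
  apply hry
  rw [← hfy, ← LinearMap.smul_apply, h, LinearMap.zero_apply]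

end FixedVector

namespace PathSpace

variable {k : ℕ} {Λ : KGraph k} (P : PathSpace Λ)

theorem rW_ofPath_of_isVertex {v : Λ.Path} (hv : Λ.IsVertex v) : P.rW (P.ofPath v) = v := by
  rw [P.rW_ofPath, Λ.rng_vertex v hv]

theorem dW_ofPath_of_isVertex {v : Λ.Path} (hv : Λ.IsVertex v) : P.dW (P.ofPath v) = 0 := by
  rw [P.dW_ofPath, hv]
  rfl

end PathSpace

section PathRepresentation

variable {k : ℕ} {Λ : KGraph k} (P : PathSpace Λ) (R : Type) [CommRing R]

theorem repT_single_of_src_eq {a : Λ.Path} {x : P.W} (h : Λ.src a = P.rW x) (s : R) :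
    repT P R a (Finsupp.single x s) = Finsupp.single (P.cons a x) s := by
  rw [repT, Finsupp.lsum_single, if_pos h, Finsupp.lsingle_apply]

theorem repT_vertex_single {v : Λ.Path} (hv : Λ.IsVertex v) {x : P.W} (hx : P.rW x = v)
    (s : R) : repT P R v (Finsupp.single x s) = Finsupp.single x s := by
  rw [repT_single_of_src_eq P R (by rw [Λ.src_vertex v hv, hx]),
    P.cons_vertex v x hv hx.symm]

theorem repTs_single_of_not_le {a : Λ.Path} {x : P.W}
    (h : ¬ ∀ i, (Λ.deg a i : ℕ∞) ≤ P.dW x i) (s : R) :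
    repTs P R a (Finsupp.single x s) = 0 := by
  rw [repTs, Finsupp.lsum_single, if_neg (fun h' => h h'.1), LinearMap.zero_apply]

theorem repTs_edge_single_ofPath_vertex {v e : Λ.Path} (hv : Λ.IsVertex v)
    (he : e ∈ Λ.edgesAt v) (s : R) :
    repTs P R e (Finsupp.single (P.ofPath v) s) = 0 := by
  obtain ⟨-, i, hei⟩ := he
  refine repTs_single_of_not_le P R (fun hle => ?_) s
  have := hle i
  simp [hei, P.dW_ofPath_of_isVertex hv] at this

theorem sub_repT_mul_repTs_single_ofPath_vertex {v e : Λ.Path} (hv : Λ.IsVertex v)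
    (he : e ∈ Λ.edgesAt v) (s : R) :
    (repT P R v - repT P R e * repTs P R e) (Finsupp.single (P.ofPath v) s) =
      Finsupp.single (P.ofPath v) s := by
  rw [LinearMap.sub_apply, Module.End.mul_apply, repTs_edge_single_ofPath_vertex P R hv he,
    map_zero, sub_zero, repT_vertex_single P R hv (P.rW_ofPath_of_isVertex hv)]

end PathRepresentation

theorem path_representation_nonvanishing_general {k : ℕ} (Λ : KGraph k)
    (hrf : Λ.RowFinite) (P : PathSpace Λ)
    (R : Type) [CommRing R] :
    ∀ r : R, r ≠ 0 → ∀ v, Λ.IsVertex v →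
      r • repT P R v ≠ 0 ∧
      r • listProd (hrf v).toFinset
          (fun e => repT P R v - repT P R e * repTs P R e) ≠ 0 := by
  intro r hr v hv
  have hry : r • Finsupp.single (P.ofPath v) (1 : R) ≠ 0 := by
    rwa [Finsupp.smul_single_one, Ne, Finsupp.single_eq_zero]
  refine ⟨Module.End.smul_ne_zero_of_apply_eq_self
      (repT_vertex_single P R hv (P.rW_ofPath_of_isVertex hv) 1) hry,
    Module.End.smul_ne_zero_of_apply_eq_self
      (listProd_apply_eq_self_of_forall fun e he => ?_) hry⟩
  exact sub_repT_mul_repTs_single_ofPath_vertex P R hv ((hrf v).mem_toFinset.mp he) 1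

/-- For the path representation Cohn `Λ`-family on the free module `𝔽_R(W_Λ)`,
for every `r ∈ R \ {0}` and every vertex `v ∈ Λ⁰`, both `r T_v ≠ 0` and
`r ∏_{e ∈ vΛ¹}(T_v - T_e T_{e*}) ≠ 0`. -/
theorem path_representation_nonvanishing {k : ℕ} (Λ : KGraph k)
    (hrf : Λ.RowFinite) (hns : Λ.NoSources) (P : PathSpace Λ)
    (R : Type) [CommRing R] :
    ∀ r : R, r ≠ 0 → ∀ v, Λ.IsVertex v →
      r • repT P R v ≠ 0 ∧
      r • listProd (hrf v).toFinset
          (fun e => repT P R v - repT P R e * repTs P R e) ≠ 0 :=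
  path_representation_nonvanishing_general Λ hrf P R
end

section
/- Let Λ be a row-finite k-graph, {S_λ, S_{μ*}} a Cohn Λ-family in an R-algebra A, λ ∈ vΛ, and E ⊆ s(λ)Λ a finite set with ∏_{ν∈E}(S_{s(λ)} - S_ν S_{ν*}) = 0. Then S_v - S_λ S_{λ*} = ∏_{ν∈E}(S_v - S_{λν} S_{(λν)*}). -/
/-!
Write `V = S_v`, `L = S_λ`, `L* = S_{λ*}`, `w = S_{s(λ)}` and `q_ν = S_ν S_{ν*}`, so that
`S_{λν} S_{(λν)*} = L q_ν L*`. Using only `V² = V`, `V L = L`, `L* V = L*`, `L* L = w`,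
`L w = L` and `q_ν w = q_ν`, one checks
`(V - L q L*) (V - L L* + L P L*) = V - L L* + L (w - q) P L*`,
so for nonempty `E` the product telescopes to
`∏_ν (V - L q_ν L*) = V - L L* + L (∏_ν (w - q_ν)) L*`, whose last product vanishes by
hypothesis. For `E = ∅` the hypothesis reads `1 = 0`.
-/

namespace KGraph

variable {k : ℕ} (Λ : KGraph k)

theorem eq_src_of_deg_comp_eq {a b : Λ.Path} (h : Λ.src a = Λ.rng b)
    (hdeg : Λ.deg (Λ.comp a b) = Λ.deg a) : b = Λ.src a := by
  have hb : Λ.deg b = 0 := add_eq_left.mp ((Λ.deg_comp a b h).symm.trans hdeg)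
  rw [h, Λ.rng_vertex b hb]

theorem minPairs_self (l : Λ.Path) : Λ.MinPairs l l = {(Λ.src l, Λ.src l)} := by
  ext ⟨μ, γ⟩
  constructor
  · rintro ⟨hμ, hγ, hμγ, hdeg, -, -⟩
    rw [sup_idem] at hdeg
    rw [Set.mem_singleton_iff, Prod.mk.injEq]
    exact ⟨Λ.eq_src_of_deg_comp_eq hμ hdeg, Λ.eq_src_of_deg_comp_eq hγ (hμγ ▸ hdeg)⟩
  · rintro ⟨⟩
    have hr : Λ.src l = Λ.rng (Λ.src l) := (Λ.rng_vertex _ (Λ.deg_src l)).symm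
    exact ⟨hr, hr, rfl, by rw [Λ.comp_src_self, sup_idem], ⟨_, hr, rfl⟩, ⟨_, hr, rfl⟩⟩

end KGraph

namespace IsCohnFamily

variable {k : ℕ} {Λ : KGraph k} {A : Type} [Ring A] {S Ss : Λ.Path → A}

theorem rng_mul (hS : IsCohnFamily Λ A S Ss) (a : Λ.Path) : S (Λ.rng a) * S a = S a := by
  rw [hS.mul_comp _ _ (Λ.src_vertex _ (Λ.deg_rng a)), Λ.comp_rng_self]

theorem mul_src (hS : IsCohnFamily Λ A S Ss) (a : Λ.Path) : S a * S (Λ.src a) = S a := by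
  rw [hS.mul_comp _ _ (Λ.rng_vertex _ (Λ.deg_src a)).symm, Λ.comp_src_self]

theorem ghost_mul_rng (hS : IsCohnFamily Λ A S Ss) (a : Λ.Path) :
    Ss a * S (Λ.rng a) = Ss a := by
  rw [← hS.ghost_vertex _ (Λ.deg_rng a),
    hS.ghost_mul_comp _ _ (Λ.src_vertex _ (Λ.deg_rng a)), Λ.comp_rng_self]

theorem ghost_mul_self (hS : IsCohnFamily Λ A S Ss) (a : Λ.Path) :
    Ss a * S a = S (Λ.src a) := by
  have hsrc : Λ.IsVertex (Λ.src a) := Λ.deg_src a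
  rw [hS.cp3, Λ.minPairs_self, finsum_mem_singleton, hS.ghost_vertex _ hsrc,
    hS.vertex_idem _ hsrc]

theorem comp_mul_ghost_comp (hS : IsCohnFamily Λ A S Ss) {a b : Λ.Path}
    (h : Λ.src a = Λ.rng b) :
    S (Λ.comp a b) * Ss (Λ.comp a b) = S a * (S b * Ss b * Ss a) := by
  rw [← hS.mul_comp a b h, ← hS.ghost_mul_comp a b h]
  simp only [mul_assoc]

end IsCohnFamily

section Conjugation

variable {A : Type} [Ring A] {V L Ls w : A}

theorem sub_conj_mul_sub_conj_add_conj (hVV : V * V = V) (hVL : V * L = L)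
    (hLsV : Ls * V = Ls) (hLsL : Ls * L = w) (hLw : L * w = L) {q : A} (hqw : q * w = q)
    (P : A) :
    (V - L * (q * Ls)) * (V - L * Ls + L * (P * Ls)) =
      V - L * Ls + L * ((w - q) * P * Ls) := by
  have eVL : ∀ x, V * (L * x) = L * x := fun x => by rw [← mul_assoc, hVL]
  have eLsL : ∀ x, Ls * (L * x) = w * x := fun x => by rw [← mul_assoc, hLsL]
  have eqw : ∀ x, q * (w * x) = q * x := fun x => by rw [← mul_assoc, hqw]
  have eLw : ∀ x, L * (w * x) = L * x := fun x => by rw [← mul_assoc, hLw]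
  simp only [mul_sub, sub_mul, mul_add, mul_assoc, hVV, eVL, hLsV, eLsL, eqw, eLw]
  abel

theorem idem_mul_sub_conj (hVV : V * V = V) (hVL : V * L = L) (q : A) :
    V * (V - L * (q * Ls)) = V - L * (q * Ls) := by
  rw [mul_sub, hVV, ← mul_assoc, hVL]

theorem sub_conj_mul_idem (hVV : V * V = V) (hLsV : Ls * V = Ls) (q : A) :
    (V - L * (q * Ls)) * V = V - L * (q * Ls) := by
  rw [sub_mul, hVV, mul_assoc, mul_assoc, hLsV]

theorem mul_prod_map_sub_conj (hVV : V * V = V) (hVL : V * L = L)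
    (hLsV : Ls * V = Ls) (hLsL : Ls * L = w) (hLw : L * w = L) (qs : List A)
    (hqs : ∀ q ∈ qs, q * w = q) :
    V * (qs.map fun q => V - L * (q * Ls)).prod =
      V - L * Ls + L * ((qs.map fun q => w - q).prod * Ls) := by
  induction qs with
  | nil => simp
  | cons q qs ih =>
    rw [List.map_cons, List.prod_cons, ← mul_assoc, idem_mul_sub_conj hVV hVL,
      ← sub_conj_mul_idem hVV hLsV, mul_assoc,
      ih fun q' hq' => hqs q' (List.mem_cons_of_mem q hq'),
      sub_conj_mul_sub_conj_add_conj hVV hVL hLsV hLsL hLw (hqs q List.mem_cons_self),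
      List.map_cons, List.prod_cons, mul_assoc]

theorem prod_map_sub_conj (hVV : V * V = V) (hVL : V * L = L)
    (hLsV : Ls * V = Ls) (hLsL : Ls * L = w) (hLw : L * w = L) {qs : List A}
    (hqs : ∀ q ∈ qs, q * w = q) (hne : qs ≠ []) :
    (qs.map fun q => V - L * (q * Ls)).prod =
      V - L * Ls + L * ((qs.map fun q => w - q).prod * Ls) := by
  obtain ⟨q, qs, rfl⟩ := List.exists_cons_of_ne_nil hne
  rw [← mul_prod_map_sub_conj hVV hVL hLsV hLsL hLw _ hqs, List.map_cons, List.prod_cons,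
    ← mul_assoc V, idem_mul_sub_conj hVV hVL]

end Conjugation

theorem cohn_family_telescoping_general {k : ℕ} (Λ : KGraph k)
    (A : Type) [Ring A]
    (S Ss : Λ.Path → A) (hS : IsCohnFamily Λ A S Ss)
    (v : Λ.Path) (l : Λ.Path) (hl : Λ.rng l = v)
    (E : Finset Λ.Path) (hE : ∀ ν ∈ E, Λ.rng ν = Λ.src l)
    (hprod : listProd E (fun ν => S (Λ.src l) - S ν * Ss ν) = 0) :
    S v - S l * Ss l =
      listProd E (fun ν => S v - S (Λ.comp l ν) * Ss (Λ.comp l ν)) := by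
  subst hl
  unfold listProd at hprod ⊢
  obtain rfl | hEne := E.eq_empty_or_nonempty
  · have : Subsingleton A := subsingleton_of_zero_eq_one (by simpa using hprod.symm)
    exact Subsingleton.elim _ _
  have hq : ∀ ν ∈ E.toList.map (fun ν => S ν * Ss ν), ν * S (Λ.src l) = ν := by
    simp only [List.mem_map, Finset.mem_toList]
    rintro _ ⟨ν, hν, rfl⟩
    rw [mul_assoc, ← hE ν hν, hS.ghost_mul_rng]
  have hne : E.toList.map (fun ν => S ν * Ss ν) ≠ [] := by simpa using hEne.ne_empty
  have hcorner := prod_map_sub_conj (hS.vertex_idem _ (Λ.deg_rng l)) (hS.rng_mul l)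
    (hS.ghost_mul_rng l) (hS.ghost_mul_self l) (hS.mul_src l) hq hne
  simp only [List.map_map, Function.comp_def, hprod, zero_mul, mul_zero, add_zero] at hcorner
  rw [← hcorner]
  congr 1
  refine List.map_congr_left fun ν hν => ?_
  rw [hS.comp_mul_ghost_comp (hE ν (Finset.mem_toList.mp hν)).symm]

/-- Lemma: for a Cohn `Λ`-family `{S_λ, S_{μ*}}`, if `λ ∈ vΛ` and `E ⊆ s(λ)Λ` is a
finite set with `∏_{ν∈E} (S_{s(λ)} - S_ν S_{ν*}) = 0`, then
`S_v - S_λ S_{λ*} = ∏_{ν∈E} (S_v - S_{λν} S_{(λν)*})`. -/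
theorem cohn_family_telescoping {k : ℕ} (Λ : KGraph k) (hrf : Λ.RowFinite)
    (R : Type) [CommRing R] (A : Type) [Ring A] [Algebra R A]
    (S Ss : Λ.Path → A) (hS : IsCohnFamily Λ A S Ss)
    (v : Λ.Path) (hv : Λ.IsVertex v) (l : Λ.Path) (hl : Λ.rng l = v)
    (E : Finset Λ.Path) (hE : ∀ ν ∈ E, Λ.rng ν = Λ.src l)
    (hprod : listProd E (fun ν => S (Λ.src l) - S ν * Ss ν) = 0) :
    S v - S l * Ss l =
      listProd E (fun ν => S v - S (Λ.comp l ν) * Ss (Λ.comp l ν)) :=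
  cohn_family_telescoping_general Λ A S Ss hS v l hl E hE hprod
end

section
/- Let Λ be a row-finite k-graph with no sources, {t_λ, t_{μ*}} the universal Cohn Λ-family generating C_R(Λ), and for n ∈ ℤ^k let C_R(Λ)_n := span_R{t_λ t_{μ*} : λ, μ ∈ Λ, d(λ) - d(μ) = n}. Then C_R(Λ) = ⊕_{n ∈ ℤ^k} C_R(Λ)_n is a ℤ^k-grading: C_R(Λ)_m · C_R(Λ)_n ⊆ C_R(Λ)_{m+n}. -/
/-! The grading is detected by the coaction `A → A[ℤ^k]`, `t_λ ↦ t_λ X^{d(λ)}`,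
`t_{μ*} ↦ t_{μ*} X^{-d(μ)}`: it sends the Cohn family to a Cohn family (the two sides of (CP3)
both have degree `d(ν) - d(γ)` because `λν = μγ`), so the universal property yields a
homomorphism `φ` with `φ x = x X^n` on `C_R(Λ)_n`, and reading off the `n`-th coefficient
separates the pieces. Their sum is closed under multiplication by (CP3), so it contains the
generated algebra. -/

theorem AddMonoidHom.map_finsum_mem_of_injective {ι M N : Type*} [AddCommMonoid M]
    [AddCommMonoid N] (g : M →+ N) (hg : Function.Injective g) (s : Set ι) (f : ι → M) :
    g (∑ᶠ i ∈ s, f i) = ∑ᶠ i ∈ s, g (f i) := by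
  rw [g.map_finsum_of_injective hg]
  exact finsum_congr fun i => g.map_finsum_of_injective hg _

theorem iSupIndep_of_linearMap_eq_single {ι R M : Type*} [Semiring R] [AddCommMonoid M]
    [Module R M] {p : ι → Submodule R M} (φ : M →ₗ[R] ι →₀ M)
    (hφ : ∀ i, ∀ x ∈ p i, φ x = Finsupp.single i x) : iSupIndep p := by
  classical
  refine iSupIndep_def.2 fun i => Submodule.disjoint_def.2 fun x hxi hx => ?_
  have hker : (⨆ (j) (_ : j ≠ i), p j) ≤ LinearMap.ker (Finsupp.lapply i ∘ₗ φ) :=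
    iSup₂_le fun j hji y hy => by simp [hφ j y hy, Finsupp.single_eq_of_ne' hji]
  simpa [hφ i x hxi] using hker hx

theorem NonUnitalAlgebra.adjoin_toSubmodule_le_iSup_of_mul_le {ι R A : Type*} [Add ι]
    [CommSemiring R] [Semiring A] [Algebra R A] {p : ι → Submodule R A}
    (hp : ∀ i j, p i * p j ≤ p (i + j))
    {s : Set A} (hs : s ⊆ (⨆ i, p i : Submodule R A)) :
    (NonUnitalAlgebra.adjoin R s).toSubmodule ≤ ⨆ i, p i := by
  have hmul : (⨆ i, p i) * (⨆ i, p i) ≤ ⨆ i, p i := by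
    rw [Submodule.iSup_mul]
    refine iSup_le fun i => ?_
    rw [Submodule.mul_iSup]
    exact iSup_le fun j => (hp i j).trans (le_iSup p _)
  exact NonUnitalAlgebra.adjoin_le
    (S := (⨆ i, p i).toNonUnitalSubalgebra fun x y hx hy => hmul (Submodule.mul_mem_mul hx hy)) hs

namespace KGraph

variable {k : ℕ} (Λ : KGraph k)

def degZ (a : Λ.Path) : Fin k → ℤ := fun i => (Λ.deg a i : ℤ)

variable {Λ}

theorem degZ_eq_zero {v : Λ.Path} (hv : Λ.deg v = 0) : Λ.degZ v = 0 := by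
  funext i; simp [degZ, hv]

theorem degZ_comp {a b : Λ.Path} (h : Λ.src a = Λ.rng b) :
    Λ.degZ (Λ.comp a b) = Λ.degZ a + Λ.degZ b := by
  funext i; simp [degZ, Λ.deg_comp a b h]

theorem degZ_add_degZ_of_mem_minPairs {a b : Λ.Path} {p : Λ.Path × Λ.Path}
    (hp : p ∈ Λ.MinPairs a b) : Λ.degZ a + Λ.degZ p.1 = Λ.degZ b + Λ.degZ p.2 := by
  obtain ⟨h1, h2, h3, -⟩ := hp
  rw [← degZ_comp h1, h3, degZ_comp h2]

theorem src_eq_src_of_mem_minPairs {a b : Λ.Path} {p : Λ.Path × Λ.Path}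
    (hp : p ∈ Λ.MinPairs a b) : Λ.src p.1 = Λ.src p.2 := by
  obtain ⟨h1, h2, h3, -⟩ := hp
  rw [← Λ.src_comp _ _ h1, h3, Λ.src_comp _ _ h2]

end KGraph

open KGraph

section Grading

variable {k : ℕ} {Λ : KGraph k} {R A : Type} [CommSemiring R] [Ring A] [Algebra R A]
  {t ts : Λ.Path → A}

variable (Λ R t ts) in
noncomputable def cohnGrade (n : Fin k → ℤ) : Submodule R A :=
  Submodule.span R {x | ∃ a b : Λ.Path, Λ.src a = Λ.src b ∧ Λ.degZ a - Λ.degZ b = n ∧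
    x = t a * ts b}

namespace IsCohnFamily

theorem mul_ghost_src (ht : IsCohnFamily Λ A t ts) (a : Λ.Path) : t a * ts (Λ.src a) = t a := by
  have hv := Λ.deg_src a
  rw [ht.ghost_vertex _ hv, ht.mul_comp _ _ (Λ.rng_vertex _ hv).symm, Λ.comp_src_self]

theorem src_mul_ghost (ht : IsCohnFamily Λ A t ts) (b : Λ.Path) : t (Λ.src b) * ts b = ts b := by
  have hv := Λ.deg_src b
  rw [← ht.ghost_vertex _ hv, ht.ghost_mul_comp _ _ (Λ.rng_vertex _ hv).symm, Λ.comp_src_self]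

theorem t_mem_cohnGrade (ht : IsCohnFamily Λ A t ts) (a : Λ.Path) :
    t a ∈ cohnGrade Λ R t ts (Λ.degZ a) :=
  Submodule.subset_span ⟨a, Λ.src a, (Λ.src_vertex _ (Λ.deg_src a)).symm,
    by rw [degZ_eq_zero (Λ.deg_src a), sub_zero], (ht.mul_ghost_src a).symm⟩

theorem ts_mem_cohnGrade (ht : IsCohnFamily Λ A t ts) (b : Λ.Path) :
    ts b ∈ cohnGrade Λ R t ts (-Λ.degZ b) :=
  Submodule.subset_span ⟨Λ.src b, b, Λ.src_vertex _ (Λ.deg_src b),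
    by rw [degZ_eq_zero (Λ.deg_src b), zero_sub], (ht.src_mul_ghost b).symm⟩

theorem mul_mem_cohnGrade (ht : IsCohnFamily Λ A t ts) {a b c e : Λ.Path}
    (hab : Λ.src a = Λ.src b) (hce : Λ.src c = Λ.src e) :
    t a * ts b * (t c * ts e) ∈
      cohnGrade Λ R t ts (Λ.degZ a - Λ.degZ b + (Λ.degZ c - Λ.degZ e)) := by
  -- The (CP3) sum may have infinite support, so rather than distributing `t a * _ * ts e`
  -- over it we pull the target piece back along that map.
  have hterm : ∀ p ∈ Λ.MinPairs b c, t p.1 * ts p.2 ∈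
      (cohnGrade Λ R t ts (Λ.degZ a - Λ.degZ b + (Λ.degZ c - Λ.degZ e))).comap
        (LinearMap.mulLeft R (t a) ∘ₗ LinearMap.mulRight R (ts e)) := by
    intro p hp
    have ha : Λ.src a = Λ.rng p.1 := hab.trans hp.1
    have he : Λ.src e = Λ.rng p.2 := hce.symm.trans hp.2.1
    refine Submodule.subset_span ⟨Λ.comp a p.1, Λ.comp e p.2, ?_, ?_, ?_⟩
    · rw [Λ.src_comp _ _ ha, Λ.src_comp _ _ he, src_eq_src_of_mem_minPairs hp]
    · rw [degZ_comp ha, degZ_comp he]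
      linear_combination degZ_add_degZ_of_mem_minPairs hp
    · simp only [LinearMap.comp_apply, LinearMap.mulRight_apply, LinearMap.mulLeft_apply]
      rw [← ht.mul_comp _ _ ha, ← ht.ghost_mul_comp _ _ he]
      simp only [mul_assoc]
  have hsum := finsum_mem_induction (· ∈ _) (Submodule.zero_mem _)
    (fun _ _ => Submodule.add_mem _) hterm
  rw [← ht.cp3] at hsum
  simpa only [Submodule.mem_comap, LinearMap.comp_apply, LinearMap.mulRight_apply,
    LinearMap.mulLeft_apply, mul_assoc] using hsum

theorem cohnGrade_mul_le (ht : IsCohnFamily Λ A t ts) (m n : Fin k → ℤ) :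
    cohnGrade Λ R t ts m * cohnGrade Λ R t ts n ≤ cohnGrade Λ R t ts (m + n) := by
  rw [cohnGrade, cohnGrade, Submodule.span_mul_span, Submodule.span_le]
  rintro _ ⟨_, ⟨a, b, hab, rfl, rfl⟩, _, ⟨c, e, hce, rfl, rfl⟩, rfl⟩
  exact ht.mul_mem_cohnGrade hab hce

theorem single_degZ (ht : IsCohnFamily Λ A t ts) :
    IsCohnFamily Λ (AddMonoidAlgebra A (Fin k → ℤ))
      (fun a => .single (Λ.degZ a) (t a)) (fun a => .single (-Λ.degZ a) (ts a)) where
  ghost_vertex v hv := by simp only [degZ_eq_zero hv, neg_zero, ht.ghost_vertex v hv]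
  vertex_idem v hv := by
    rw [AddMonoidAlgebra.single_mul_single, ht.vertex_idem v hv, degZ_eq_zero hv, add_zero]
  vertex_orth v w hv hw hvw := by
    rw [AddMonoidAlgebra.single_mul_single, ht.vertex_orth v w hv hw hvw,
      AddMonoidAlgebra.single_zero]
  mul_comp a b h := by rw [AddMonoidAlgebra.single_mul_single, ht.mul_comp a b h, degZ_comp h]
  ghost_mul_comp a b h := by
    rw [AddMonoidAlgebra.single_mul_single, ht.ghost_mul_comp a b h, degZ_comp h, neg_add_rev]
  cp3 a b := by
    rw [AddMonoidAlgebra.single_mul_single, ht.cp3 a b]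
    refine ((AddMonoidAlgebra.singleAddHom _).map_finsum_mem_of_injective
      AddMonoidAlgebra.single_right_injective _ _).trans (finsum_mem_congr rfl fun p hp => ?_)
    rw [AddMonoidAlgebra.singleAddHom_apply, AddMonoidAlgebra.single_mul_single]
    congr 1
    linear_combination -degZ_add_degZ_of_mem_minPairs hp

end IsCohnFamily

theorem NonUnitalAlgHom.map_eq_single_of_mem_cohnGrade
    (φ : A →ₙₐ[R] AddMonoidAlgebra A (Fin k → ℤ))
    (hφt : ∀ a, φ (t a) = .single (Λ.degZ a) (t a))
    (hφts : ∀ a, φ (ts a) = .single (-Λ.degZ a) (ts a))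
    {n : Fin k → ℤ} {x : A} (hx : x ∈ cohnGrade Λ R t ts n) :
    φ x = .single n x := by
  induction hx using Submodule.span_induction with
  | mem x hx =>
    obtain ⟨a, b, -, rfl, rfl⟩ := hx
    rw [map_mul, hφt, hφts, AddMonoidAlgebra.single_mul_single, sub_eq_add_neg]
  | zero => rw [map_zero, AddMonoidAlgebra.single_zero]
  | add x y _ _ hx hy => rw [map_add, hx, hy, AddMonoidAlgebra.single_add]
  | smul r x _ hx => rw [map_smul, hx, AddMonoidAlgebra.smul_single]

end Grading

theorem cohn_algebra_graded_general {k : ℕ} (Λ : KGraph k)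
    (R : Type) [CommRing R] (A : Type) [Ring A] [Algebra R A]
    (t ts : Λ.Path → A) (ht : IsCohnFamily Λ A t ts)
    -- `A` together with `t, ts` is the *universal* Cohn `Λ`-family:
    (huniv : ∀ (B : Type) [Ring B] [Algebra R B] (T Ts : Λ.Path → B),
      IsCohnFamily Λ B T Ts →
        ∃! φ : A →ₙₐ[R] B, (∀ a, φ (t a) = T a) ∧ (∀ a, φ (ts a) = Ts a))
    (hgen : NonUnitalAlgebra.adjoin R (Set.range t ∪ Set.range ts) = ⊤) :
    DirectSum.IsInternal (fun n : Fin k → ℤ =>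
        Submodule.span R {x | ∃ a b : Λ.Path, Λ.src a = Λ.src b ∧
          (fun i => (Λ.deg a i : ℤ) - (Λ.deg b i : ℤ)) = n ∧ x = t a * ts b}) ∧
      ∀ (m n : Fin k → ℤ) (x y : A),
        x ∈ Submodule.span R {x | ∃ a b : Λ.Path, Λ.src a = Λ.src b ∧
              (fun i => (Λ.deg a i : ℤ) - (Λ.deg b i : ℤ)) = m ∧ x = t a * ts b} →
        y ∈ Submodule.span R {x | ∃ a b : Λ.Path, Λ.src a = Λ.src b ∧
              (fun i => (Λ.deg a i : ℤ) - (Λ.deg b i : ℤ)) = n ∧ x = t a * ts b} →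
        x * y ∈ Submodule.span R {x | ∃ a b : Λ.Path, Λ.src a = Λ.src b ∧
              (fun i => (Λ.deg a i : ℤ) - (Λ.deg b i : ℤ)) = m + n ∧ x = t a * ts b} := by
  change DirectSum.IsInternal (cohnGrade Λ R t ts) ∧ ∀ m n x y, x ∈ cohnGrade Λ R t ts m →
    y ∈ cohnGrade Λ R t ts n → x * y ∈ cohnGrade Λ R t ts (m + n)
  obtain ⟨φ, ⟨hφt, hφts⟩, -⟩ := huniv _ _ _ ht.single_degZ
  have hspan : (NonUnitalAlgebra.adjoin R (Set.range t ∪ Set.range ts)).toSubmodule ≤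
      ⨆ n, cohnGrade Λ R t ts n := by
    refine NonUnitalAlgebra.adjoin_toSubmodule_le_iSup_of_mul_le ht.cohnGrade_mul_le ?_
    rintro _ (⟨a, rfl⟩ | ⟨b, rfl⟩)
    · exact Submodule.mem_iSup_of_mem _ (ht.t_mem_cohnGrade a)
    · exact Submodule.mem_iSup_of_mem _ (ht.ts_mem_cohnGrade b)
  rw [hgen, NonUnitalAlgebra.top_toSubmodule] at hspan
  have hindep : iSupIndep (cohnGrade Λ R t ts) :=
    iSupIndep_of_linearMap_eq_single ((AddMonoidAlgebra.coeffLinearEquiv R).toLinearMap ∘ₗ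
        (φ : A →ₗ[R] AddMonoidAlgebra A (Fin k → ℤ)))
      fun n x hx => by simp [φ.map_eq_single_of_mem_cohnGrade hφt hφts hx]
  exact ⟨(DirectSum.isInternal_submodule_iff_iSupIndep_and_iSup_eq_top _).2
      ⟨hindep, top_le_iff.1 hspan⟩,
    fun m n x y hx hy => ht.cohnGrade_mul_le m n (Submodule.mul_mem_mul hx hy)⟩

/-- Theorem: the universal Cohn path algebra `C_R(Λ)` of a row-finite `k`-graph with no
sources is `ℤ^k`-graded by the submodules
`C_R(Λ)_n = span_R {t_λ t_{μ*} : d(λ) - d(μ) = n}`: the algebra is the internal direct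
sum of these submodules and `C_R(Λ)_m ⬝ C_R(Λ)_n ⊆ C_R(Λ)_{m+n}`. -/
theorem cohn_algebra_graded {k : ℕ} (Λ : KGraph k)
    (hrf : Λ.RowFinite) (hns : Λ.NoSources)
    (R : Type) [CommRing R] (A : Type) [Ring A] [Algebra R A]
    (t ts : Λ.Path → A) (ht : IsCohnFamily Λ A t ts)
    -- `A` together with `t, ts` is the *universal* Cohn `Λ`-family:
    (huniv : ∀ (B : Type) [Ring B] [Algebra R B] (T Ts : Λ.Path → B),
      IsCohnFamily Λ B T Ts →
        ∃! φ : A →ₙₐ[R] B, (∀ a, φ (t a) = T a) ∧ (∀ a, φ (ts a) = Ts a))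
    (hgen : NonUnitalAlgebra.adjoin R (Set.range t ∪ Set.range ts) = ⊤) :
    DirectSum.IsInternal (fun n : Fin k → ℤ =>
        Submodule.span R {x | ∃ a b : Λ.Path, Λ.src a = Λ.src b ∧
          (fun i => (Λ.deg a i : ℤ) - (Λ.deg b i : ℤ)) = n ∧ x = t a * ts b}) ∧
      ∀ (m n : Fin k → ℤ) (x y : A),
        x ∈ Submodule.span R {x | ∃ a b : Λ.Path, Λ.src a = Λ.src b ∧
              (fun i => (Λ.deg a i : ℤ) - (Λ.deg b i : ℤ)) = m ∧ x = t a * ts b} →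
        y ∈ Submodule.span R {x | ∃ a b : Λ.Path, Λ.src a = Λ.src b ∧
              (fun i => (Λ.deg a i : ℤ) - (Λ.deg b i : ℤ)) = n ∧ x = t a * ts b} →
        x * y ∈ Submodule.span R {x | ∃ a b : Λ.Path, Λ.src a = Λ.src b ∧
              (fun i => (Λ.deg a i : ℤ) - (Λ.deg b i : ℤ)) = m + n ∧ x = t a * ts b} :=
  cohn_algebra_graded_general Λ R A t ts ht huniv hgen
end
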